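/- Let m ∈ L¹([0,T], ℝ₊) and f⁰, α > 0. Suppose (f_n) is a countable family of continuous functions from [0,T] to ℝ₊ such that ‖f₀‖_∞ ≤ f⁰ and f_{n+1}(t) ≤ α(1 + ∫₀ᵗ m(s) f_n(s) ds) for all t ∈ [0,T] and all n ≥ 0. Then sup_{n ≥ 0} ‖f_n‖_∞ ≤ (α + f⁰) · exp(α ‖m‖_{L¹}). -/

import Mathlib

/-!
Write `M t = ∫₀ᵗ m`. As the primitive of an integrable function, `M` is absolutely
continuous with `M' = m` almost everywhere, so the chain rule for absolutely continuous
functions gives `α ∫₀ᵗ m e^{αM} = e^{αM t} - 1`. Hence `(α + f⁰) e^{αM}` is a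
supersolution of the recursion, `α (1 + ∫₀ᵗ m (α + f⁰) e^{αM}) = (α + f⁰) e^{αM t} - f⁰`,
and induction on `n` bounds every `f n` by it. Finally `M t ≤ ‖m‖_{L¹}`.
-/

open MeasureTheory Set Filter NNReal intervalIntegral

theorem AbsolutelyContinuousOnInterval.comp_lipschitzOnWith {X Y : Type*} [PseudoMetricSpace X]
    [PseudoMetricSpace Y] {f : ℝ → X} {g : X → Y} {K : ℝ≥0} {s : Set X} {a b : ℝ}
    (hg : LipschitzOnWith K g s) (hf : AbsolutelyContinuousOnInterval f a b)
    (hfs : MapsTo f (uIcc a b) s) : AbsolutelyContinuousOnInterval (g ∘ f) a b := by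
  unfold AbsolutelyContinuousOnInterval at hf ⊢
  have hKf := hf.const_mul (K : ℝ)
  rw [mul_zero] at hKf
  refine squeeze_zero' (Eventually.of_forall fun _ ↦ Finset.sum_nonneg fun _ _ ↦ dist_nonneg)
    ?_ hKf
  filter_upwards [mem_inf_of_right (mem_principal_self _)] with E hE
  rw [Finset.mul_sum]
  gcongr with i hi
  exact hg.dist_le_mul _ (hfs (hE.1 i hi).1) _ (hfs (hE.1 i hi).2)

theorem AbsolutelyContinuousOnInterval.comp_locallyLipschitz {F Y : Type*}
    [SeminormedAddCommGroup F] [PseudoMetricSpace Y] {f : ℝ → F} {g : F → Y} {a b : ℝ}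
    (hg : LocallyLipschitz g) (hf : AbsolutelyContinuousOnInterval f a b) :
    AbsolutelyContinuousOnInterval (g ∘ f) a b := by
  have hcpt : IsCompact (f '' uIcc a b) := isCompact_uIcc.image_of_continuousOn hf.continuousOn
  obtain ⟨K, hK⟩ := hg.locallyLipschitzOn.exists_lipschitzOnWith_of_compact hcpt
  exact hf.comp_lipschitzOnWith hK (mapsTo_image f _)

theorem IntervalIntegrable.integral_deriv_comp_primitive_mul {m φ : ℝ → ℝ} {a b : ℝ}
    (hm : IntervalIntegrable m volume a b) (hφ : ContDiff ℝ 1 φ) :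
    ∫ x in a..b, deriv φ (∫ s in a..x, m s) * m x = φ (∫ s in a..b, m s) - φ 0 := by
  have hac := (hm.absolutelyContinuousOnInterval_intervalIntegral
    left_mem_uIcc).comp_locallyLipschitz hφ.locallyLipschitz
  have hftc := hac.integral_deriv_eq_sub
  rw [Function.comp_apply, Function.comp_apply, integral_same] at hftc
  rw [← hftc]
  refine integral_congr_ae ?_
  filter_upwards [hm.ae_hasDerivAt_integral] with x hx hxab
  exact (((hφ.differentiable one_ne_zero _).hasDerivAt.comp x
    (hx (uIoc_subset_uIcc hxab) a left_mem_uIcc)).deriv).symm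

theorem IntervalIntegrable.mul_integral_exp_primitive_mul {m : ℝ → ℝ} {a b : ℝ}
    (hm : IntervalIntegrable m volume a b) (c : ℝ) :
    c * ∫ x in a..b, Real.exp (c * ∫ s in a..x, m s) * m x =
      Real.exp (c * ∫ s in a..b, m s) - 1 := by
  have h := hm.integral_deriv_comp_primitive_mul (φ := fun y ↦ Real.exp (c * y)) (by fun_prop)
  simp only [mul_zero, Real.exp_zero] at h
  rw [← h, ← intervalIntegral.integral_const_mul]
  congr 1 with x
  have hderiv : deriv (fun y ↦ Real.exp (c * y)) (∫ s in a..x, m s) =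
      Real.exp (c * ∫ s in a..x, m s) * c := by
    simpa using ((hasDerivAt_id _).const_mul c).exp.deriv
  rw [hderiv]
  ring

theorem mul_one_add_setIntegral_le_mul_exp_primitive {m g : ℝ → ℝ} {t f0 α : ℝ}
    (ht : 0 ≤ t) (hm : IntervalIntegrable m volume 0 t) (hm0 : ∀ s ∈ Ioc 0 t, 0 ≤ m s)
    (hf0 : 0 ≤ f0) (hα : 0 ≤ α) (hg0 : ∀ s ∈ Ioc 0 t, 0 ≤ g s)
    (hg : ∀ s ∈ Ioc 0 t, g s ≤ (α + f0) * Real.exp (α * ∫ r in 0..s, m r)) :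
    α * (1 + ∫ s in Ioc 0 t, m s * g s) ≤ (α + f0) * Real.exp (α * ∫ s in 0..t, m s) := by
  have hcont : ContinuousOn (fun s ↦ Real.exp (α * ∫ r in 0..s, m r)) (uIcc 0 t) :=
    Real.continuous_exp.comp_continuousOn
      (continuousOn_const.mul (continuousOn_primitive_interval' hm left_mem_uIcc))
  have hint : IntegrableOn (fun s ↦ m s * ((α + f0) * Real.exp (α * ∫ r in 0..s, m r)))
      (Ioc 0 t) :=
    (hm.mul_continuousOn (continuousOn_const.mul hcont)).1
  have hmono : ∫ s in Ioc 0 t, m s * g s ≤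
      ∫ s in Ioc 0 t, m s * ((α + f0) * Real.exp (α * ∫ r in 0..s, m r)) :=
    setIntegral_mono_of_nonneg (fun s hs ↦ mul_nonneg (hm0 s hs) (hg0 s hs))
      (fun s hs ↦ mul_le_mul_of_nonneg_left (hg s hs) (hm0 s hs)) hint
  have hexp : α * ∫ s in Ioc 0 t, m s * ((α + f0) * Real.exp (α * ∫ r in 0..s, m r)) =
      (α + f0) * (Real.exp (α * ∫ s in 0..t, m s) - 1) := by
    rw [← hm.mul_integral_exp_primitive_mul, ← integral_of_le ht]
    simp only [← intervalIntegral.integral_const_mul]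
    congr 1 with s
    ring
  calc α * (1 + ∫ s in Ioc 0 t, m s * g s)
      ≤ α * (1 + ∫ s in Ioc 0 t, m s * ((α + f0) * Real.exp (α * ∫ r in 0..s, m r))) := by
        gcongr
    _ = α + (α + f0) * (Real.exp (α * ∫ s in 0..t, m s) - 1) := by rw [mul_one_add, hexp]
    _ ≤ (α + f0) * Real.exp (α * ∫ s in 0..t, m s) := by linarith

theorem le_mul_exp_primitive_of_le_mul_one_add_setIntegral {m : ℝ → ℝ} {f : ℕ → ℝ → ℝ}
    {T f0 α : ℝ} (hm : IntervalIntegrable m volume 0 T) (hm0 : ∀ s, 0 ≤ m s) (hf0 : 0 ≤ f0)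
    (hα : 0 ≤ α) (hnonneg : ∀ n, ∀ t ∈ Icc 0 T, 0 ≤ f n t)
    (hbase : ∀ t ∈ Icc 0 T, f 0 t ≤ f0)
    (hrec : ∀ n, ∀ t ∈ Icc 0 T, f (n + 1) t ≤ α * (1 + ∫ s in Ioc 0 t, m s * f n s))
    (n : ℕ) : ∀ t ∈ Icc 0 T, f n t ≤ (α + f0) * Real.exp (α * ∫ s in 0..t, m s) := by
  induction n with
  | zero =>
    intro t ht
    have hM : 0 ≤ ∫ s in 0..t, m s := integral_nonneg ht.1 fun s _ ↦ hm0 s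
    calc f 0 t ≤ f0 := hbase t ht
      _ ≤ α + f0 := by linarith
      _ ≤ (α + f0) * Real.exp (α * ∫ s in 0..t, m s) :=
        le_mul_of_one_le_right (by linarith) (Real.one_le_exp (mul_nonneg hα hM))
  | succ n ih =>
    intro t ht
    have hIoc : Ioc 0 t ⊆ Icc 0 T := Ioc_subset_Icc_self.trans (Icc_subset_Icc_right ht.2)
    refine (hrec n t ht).trans (mul_one_add_setIntegral_le_mul_exp_primitive ht.1
      (hm.mono_set (uIcc_subset_uIcc_left (Icc_subset_uIcc ht))) (fun s _ ↦ hm0 s) hf0 hα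
      (fun s hs ↦ hnonneg n s (hIoc hs)) (fun s hs ↦ ih s (hIoc hs)))

theorem uniform_bound_recurrent_integral_estimates_general
    (T : ℝ)
    (m : ℝ → ℝ) (hm : IntegrableOn m (Icc 0 T)) (hm0 : ∀ t, 0 ≤ m t)
    (f0 α : ℝ) (hf0 : 0 < f0) (hα : 0 < α)
    (f : ℕ → ℝ → ℝ)
    (hnonneg : ∀ n, ∀ t ∈ Icc (0:ℝ) T, 0 ≤ f n t)
    (hbase : ∀ t ∈ Icc (0:ℝ) T, f 0 t ≤ f0)
    (hrec : ∀ n, ∀ t ∈ Icc (0:ℝ) T,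
      f (n + 1) t ≤ α * (1 + ∫ s in Ioc 0 t, m s * f n s)) :
    ∀ n, ∀ t ∈ Icc (0:ℝ) T,
      f n t ≤ (α + f0) * Real.exp (α * ∫ s in Icc (0:ℝ) T, m s) := by
  intro n t ht
  have hT : 0 ≤ T := ht.1.trans ht.2
  have hmT : IntervalIntegrable m volume 0 T :=
    (intervalIntegrable_iff_integrableOn_Icc_of_le hT).2 hm
  have hprimitive : ∫ s in 0..t, m s ≤ ∫ s in 0..T, m s :=
    integral_mono_interval le_rfl ht.1 ht.2 (ae_of_all _ hm0) hmT
  calc f n t ≤ (α + f0) * Real.exp (α * ∫ s in 0..t, m s) :=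
        le_mul_exp_primitive_of_le_mul_one_add_setIntegral hmT hm0 hf0.le hα.le hnonneg
          hbase hrec n t ht
    _ ≤ (α + f0) * Real.exp (α * ∫ s in 0..T, m s) := by gcongr
    _ = (α + f0) * Real.exp (α * ∫ s in Icc 0 T, m s) := by
        rw [integral_Icc_eq_integral_Ioc, integral_of_le hT]

/-- **A uniform bound on families of functions satisfying recurrent integral estimates.**
If `‖f 0‖_∞ ≤ f⁰` and `f (n+1) t ≤ α (1 + ∫₀ᵗ m s * f n s ds)` for all `n` and
`t ∈ [0,T]`, then `sup_n ‖f n‖_∞ ≤ (α + f⁰) exp (α ‖m‖_{L¹})`. -/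
theorem uniform_bound_recurrent_integral_estimates
    (T : ℝ) (hT : 0 < T)
    (m : ℝ → ℝ) (hm : IntegrableOn m (Icc 0 T)) (hm0 : ∀ t, 0 ≤ m t)
    (f0 α : ℝ) (hf0 : 0 < f0) (hα : 0 < α)
    (f : ℕ → ℝ → ℝ)
    (hcont : ∀ n, ContinuousOn (f n) (Icc 0 T))
    (hnonneg : ∀ n, ∀ t ∈ Icc (0:ℝ) T, 0 ≤ f n t)
    (hbase : ∀ t ∈ Icc (0:ℝ) T, f 0 t ≤ f0)
    (hrec : ∀ n, ∀ t ∈ Icc (0:ℝ) T,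
      f (n + 1) t ≤ α * (1 + ∫ s in Ioc 0 t, m s * f n s)) :
    ∀ n, ∀ t ∈ Icc (0:ℝ) T,
      f n t ≤ (α + f0) * Real.exp (α * ∫ s in Icc (0:ℝ) T, m s) :=
  uniform_bound_recurrent_integral_estimates_general T m hm hm0 f0 α hf0 hα f hnonneg hbase hrec
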